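/- (Dedekind's objection) The map C is not surjective onto [0,1): if z ∈ [0,1) and there exists an integer l ≥ 0 such that d_{l+2k−1}(z) = 9 for every k ≥ 1, then there do not exist x, y ∈ [0,1) with C(x,y) = z. -/

import Mathlib

/-!
The digits of `C(x, y)` are the digits of `x` and `y`, interleaved: a sequence of digits in
`0, …, 9` that is not eventually `9` is the digit sequence of its sum, and the digits of a real
number are never eventually `9`. So if `C(x, y) = z`, the digits of `z` in positions `l + 2k - 1`
are, from some point on, the digits of `x` (for `l` even) or of `y` (for `l` odd), and these
cannot all be `9`.
-/

open Set

noncomputable def digit (k : ℕ) (x : ℝ) : ℤ :=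
  ⌊(10 : ℝ) ^ k * x⌋ - 10 * ⌊(10 : ℝ) ^ (k - 1) * x⌋

noncomputable def cantorC (x y : ℝ) : ℝ :=
  (∑' k : ℕ, (digit (k + 1) x : ℝ) / 10 ^ (2 * (k + 1) - 1)) +
    ∑' k : ℕ, (digit (k + 1) y : ℝ) / 10 ^ (2 * (k + 1))

open Filter

lemma digit_succ (k : ℕ) (x : ℝ) :
    digit (k + 1) x = ⌊10 * ((10 : ℝ) ^ k * x)⌋ - 10 * ⌊(10 : ℝ) ^ k * x⌋ := by
  simp only [digit, Nat.add_sub_cancel, pow_succ, mul_comm _ (10 : ℝ), mul_assoc]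

lemma digit_nonneg (k : ℕ) (x : ℝ) : 0 ≤ digit (k + 1) x := by
  have h : 10 * ⌊(10 : ℝ) ^ k * x⌋ ≤ ⌊10 * ((10 : ℝ) ^ k * x)⌋ :=
    Int.le_floor.2 (by push_cast; linarith [Int.floor_le ((10 : ℝ) ^ k * x)])
  rw [digit_succ]
  omega

lemma digit_le_nine (k : ℕ) (x : ℝ) : digit (k + 1) x ≤ 9 := by
  have h : ⌊10 * ((10 : ℝ) ^ k * x)⌋ < 10 * ⌊(10 : ℝ) ^ k * x⌋ + 10 :=
    Int.floor_lt.2 (by push_cast; linarith [Int.lt_floor_add_one ((10 : ℝ) ^ k * x)])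
  rw [digit_succ]
  omega

lemma digit_sub_intCast (k : ℕ) (x : ℝ) (c : ℤ) :
    digit (k + 1) (x - c) = digit (k + 1) x := by
  have h : ∀ j : ℕ, (10 : ℝ) ^ j * (x - c) = 10 ^ j * x - ((10 ^ j * c : ℤ) : ℝ) := by
    intro j
    push_cast
    ring
  simp only [digit, h, Int.floor_sub_intCast, Nat.add_sub_cancel]
  ring

lemma digit_pow_mul (k N : ℕ) (x : ℝ) : digit (k + 1) (10 ^ N * x) = digit (k + N + 1) x := by
  simp only [digit, Nat.add_sub_cancel, ← mul_assoc, ← pow_add]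
  rw [Nat.add_right_comm]

lemma not_forall_digit_eq_nine (y : ℝ) : ¬ ∀ k, digit (k + 1) y = 9 := by
  intro h9
  have hfloor_add_one : ∀ j : ℕ, ⌊(10 : ℝ) ^ j * y⌋ + 1 = 10 ^ j * (⌊y⌋ + 1) := by
    intro j
    induction j with
    | zero => simp
    | succ j ih =>
      have h := h9 j
      rw [digit_succ] at h
      rw [pow_succ', mul_assoc, pow_succ']
      linarith
  set δ := (⌊y⌋ + 1 : ℝ) - y
  have hδ : 0 < δ := by linarith [Int.lt_floor_add_one y]
  have hbound : ∀ j : ℕ, (10 : ℝ) ^ j * δ ≤ 1 := by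
    intro j
    have hfloor : (⌊(10 : ℝ) ^ j * y⌋ : ℝ) = 10 ^ j * (⌊y⌋ + 1) - 1 := by
      rw [eq_sub_iff_add_eq]
      exact_mod_cast hfloor_add_one j
    linarith [Int.floor_le ((10 : ℝ) ^ j * y)]
  obtain ⟨j, hj⟩ := pow_unbounded_of_one_lt δ⁻¹ (by norm_num : (1 : ℝ) < 10)
  rw [inv_lt_iff_one_lt_mul₀ hδ] at hj
  linarith [hbound j]

lemma frequently_digit_ne_nine (x : ℝ) : ∃ᶠ k in atTop, digit (k + 1) x ≠ 9 := by
  rw [frequently_atTop]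
  intro N
  by_contra! h
  apply not_forall_digit_eq_nine (10 ^ N * x)
  intro k
  rw [digit_pow_mul]
  exact h _ (by omega)

/-- `a n` plays the role of the digit `d_{n+1}`. -/
structure IsProperDigitSeq (a : ℕ → ℤ) : Prop where
  nonneg : ∀ n, 0 ≤ a n
  le_nine : ∀ n, a n ≤ 9
  frequently_ne_nine : ∃ᶠ n in atTop, a n ≠ 9

lemma hasSum_nine_div_ten_pow : HasSum (fun n : ℕ => (9 : ℝ) / 10 ^ (n + 1)) 1 := by
  have h := (hasSum_geometric_of_lt_one (r := (1 / 10 : ℝ)) (by norm_num) (by norm_num)).mul_left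
    (9 / 10)
  rw [show (9 / 10 : ℝ) * (1 - 1 / 10)⁻¹ = 1 by norm_num] at h
  refine h.congr_fun fun n => ?_
  rw [one_div_pow, pow_succ]
  field_simp

lemma summable_div_ten_pow {a : ℕ → ℤ} (h0 : ∀ n, 0 ≤ a n) (h9 : ∀ n, a n ≤ 9) :
    Summable (fun n => (a n : ℝ) / 10 ^ (n + 1)) :=
  hasSum_nine_div_ten_pow.summable.of_nonneg_of_le
    (fun n => div_nonneg (by exact_mod_cast h0 n) (by positivity))
    fun n => div_le_div_of_nonneg_right (by exact_mod_cast h9 n : (a n : ℝ) ≤ 9) (by positivity)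

lemma hasSum_tail {a : ℕ → ℤ} {s : ℝ}
    (hs : HasSum (fun n => (a n : ℝ) / 10 ^ (n + 1)) s) :
    HasSum (fun n => (a (n + 1) : ℝ) / 10 ^ (n + 1)) (10 * s - a 0) := by
  have h := ((hasSum_nat_add_iff' 1).2 hs).mul_left 10
  rw [Finset.sum_range_one, zero_add, pow_one, mul_sub, mul_div_cancel₀ _ (by norm_num)] at h
  refine h.congr_fun fun n => ?_
  rw [pow_succ (10 : ℝ) (n + 1)]
  field_simp

namespace IsProperDigitSeq

variable {a : ℕ → ℤ} (ha : IsProperDigitSeq a)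
include ha

lemma tail : IsProperDigitSeq (fun n => a (n + 1)) where
  nonneg n := ha.nonneg (n + 1)
  le_nine n := ha.le_nine (n + 1)
  frequently_ne_nine := by
    rw [frequently_atTop]
    intro N
    obtain ⟨n, hn, hne⟩ := frequently_atTop.1 ha.frequently_ne_nine (N + 1)
    exact ⟨n - 1, by omega, by rwa [Nat.sub_add_cancel (by omega)]⟩

lemma mem_Ico {s : ℝ} (hs : HasSum (fun n => (a n : ℝ) / 10 ^ (n + 1)) s) : s ∈ Ico 0 1 := by
  refine ⟨hs.nonneg fun n => div_nonneg (by exact_mod_cast ha.nonneg n) (by positivity), ?_⟩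
  obtain ⟨n, hn⟩ := ha.frequently_ne_nine.exists
  refine hasSum_lt (i := n) (fun m => ?_) ?_ hs hasSum_nine_div_ten_pow
  · exact div_le_div_of_nonneg_right (by exact_mod_cast ha.le_nine m : (a m : ℝ) ≤ 9)
      (by positivity)
  · have : (a n : ℝ) < 9 := by exact_mod_cast lt_of_le_of_ne (ha.le_nine n) hn
    exact div_lt_div_of_pos_right this (by positivity)

lemma digit_eq {s : ℝ} (hs : HasSum (fun n => (a n : ℝ) / 10 ^ (n + 1)) s) (n : ℕ) :
    digit (n + 1) s = a n := by
  induction n generalizing a s with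
  | zero =>
    obtain ⟨hs0, hs1⟩ := ha.mem_Ico hs
    obtain ⟨ht0, ht1⟩ := ha.tail.mem_Ico (hasSum_tail hs)
    rw [digit_succ, pow_zero, one_mul, Int.floor_eq_zero_iff.2 ⟨hs0, hs1⟩, mul_zero, sub_zero,
      Int.floor_eq_iff]
    constructor <;> linarith
  | succ n ih =>
    -- `10 * s - a 0` has the digits of `s` and the terms of `a`, both shifted by one
    rw [← ih ha.tail (hasSum_tail hs), digit_sub_intCast, ← pow_one (10 : ℝ), digit_pow_mul]

end IsProperDigitSeq

/-- `interleave x y m` is the digit `d_{m+1}` of `C(x, y)`. -/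
noncomputable def interleave (x y : ℝ) (m : ℕ) : ℤ :=
  if Even m then digit (m / 2 + 1) x else digit (m / 2 + 1) y

@[simp]
lemma interleave_two_mul (x y : ℝ) (k : ℕ) : interleave x y (2 * k) = digit (k + 1) x := by
  simp [interleave]

@[simp]
lemma interleave_two_mul_add_one (x y : ℝ) (k : ℕ) :
    interleave x y (2 * k + 1) = digit (k + 1) y := by
  simp [interleave, show (2 * k + 1) / 2 = k by omega]

lemma isProperDigitSeq_interleave (x y : ℝ) : IsProperDigitSeq (interleave x y) where
  nonneg m := by unfold interleave; split <;> apply digit_nonneg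
  le_nine m := by unfold interleave; split <;> apply digit_le_nine
  frequently_ne_nine :=
    (strictMono_mul_left_of_pos two_pos).tendsto_atTop.frequently_map _
      (fun k hk => by rwa [interleave_two_mul]) (frequently_digit_ne_nine x)

lemma hasSum_interleave (x y : ℝ) :
    HasSum (fun m => (interleave x y m : ℝ) / 10 ^ (m + 1)) (cantorC x y) := by
  set f : ℕ → ℝ := fun m => (interleave x y m : ℝ) / 10 ^ (m + 1)
  have hs : Summable f := summable_div_ten_pow (isProperDigitSeq_interleave x y).nonneg
    (isProperDigitSeq_interleave x y).le_nine
  have he : Summable fun k => f (2 * k) :=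
    hs.comp_injective (mul_right_injective₀ two_ne_zero)
  have ho : Summable fun k => f (2 * k + 1) :=
    hs.comp_injective ((add_left_injective 1).comp (mul_right_injective₀ two_ne_zero))
  suffices cantorC x y = ∑' m, f m from this ▸ hs.hasSum
  rw [cantorC, ← tsum_even_add_odd he ho]
  congr 1 <;> refine tsum_congr fun k => ?_ <;> simp [f, mul_add]

theorem cantorC_not_surjective_general (z : ℝ) (l : ℕ)
    (hl : ∀ k : ℕ, 1 ≤ k → digit (l + 2 * k - 1) z = 9) :
    ¬ ∃ x ∈ Ico (0 : ℝ) 1, ∃ y ∈ Ico (0 : ℝ) 1, cantorC x y = z := by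
  rintro ⟨x, -, y, -, rfl⟩
  have hC := (isProperDigitSeq_interleave x y).digit_eq (hasSum_interleave x y)
  obtain ⟨t, rfl | rfl⟩ := Nat.even_or_odd' l
  · obtain ⟨n, hn, hne⟩ := frequently_atTop.1 (frequently_digit_ne_nine x) t
    apply hne
    rw [← interleave_two_mul x y, ← hC, ← hl (n - t + 1) (by omega)]
    congr 1
    omega
  · obtain ⟨n, hn, hne⟩ := frequently_atTop.1 (frequently_digit_ne_nine y) t
    apply hne
    rw [← interleave_two_mul_add_one x y, ← hC, ← hl (n - t + 1) (by omega)]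
    congr 1
    omega

/-- **Dedekind's objection.** If `z ∈ [0,1)` has `d_{l+2k-1}(z) = 9` for every `k ≥ 1`
(for some `l ≥ 0`), then `z` has no preimage under Cantor's interleaving map `C`. -/
theorem cantorC_not_surjective (z : ℝ) (hz : z ∈ Ico (0 : ℝ) 1) (l : ℕ)
    (hl : ∀ k : ℕ, 1 ≤ k → digit (l + 2 * k - 1) z = 9) :
    ¬ ∃ x ∈ Ico (0 : ℝ) 1, ∃ y ∈ Ico (0 : ℝ) 1, cantorC x y = z :=
  cantorC_not_surjective_general z l hl
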